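/- arXiv:2209.05544 — 5 statements merged into one kernel-verified Lean document; each statement's English description precedes it below -/
import Mathlib

section
/- Let V_0, …, V_n be vector spaces, R_m : V_m → V_{m+1} linear maps for m = 0, …, n−1, and P_m : V_m → V_m linear maps with complements Q_m = id − P_m. Define the multi-layer propagator R(j,i) = R_{j−1} ∘ ⋯ ∘ R_i for j > i with R(i,i) = id, and the orthogonal-dynamics propagator Φ(j,i) = (Q_j ∘ R_{j−1}) ∘ (Q_{j−1} ∘ R_{j−2}) ∘ ⋯ ∘ (Q_{i+1} ∘ R_i) for j > i with Φ(i,i) = id. Then the discrete Dyson identity holds: R(n,0) = Φ(n,0) + Σ_{m=0}^{n−1} R(n,m+1) ∘ P_{m+1} ∘ R_m ∘ Φ(m,0). -/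
/-- **Discrete Dyson identity** (Mori–Zwanzig formulation of deep learning).
`V m` is the function space attached to layer `m`, `R m : V m →ₗ V (m+1)` the one-layer
evolution operator, `P m` a projection with complement `Q m = id - P m`.
`Rp i j` is the multi-layer propagator `R(j,i) = R_{j-1} ∘ ⋯ ∘ R_i` (with `Rp i i = id`),
and `Φ i j` is the orthogonal-dynamics propagator
`Φ(j,i) = (Q_j ∘ R_{j-1}) ∘ ⋯ ∘ (Q_{i+1} ∘ R_i)` (with `Φ i i = id`). Then
`R(n,0) = Φ(n,0) + ∑_{m=0}^{n-1} R(n,m+1) ∘ P_{m+1} ∘ R_m ∘ Φ(m,0)`. -/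
theorem discrete_dyson_identity
    (V : ℕ → Type*) [∀ m, AddCommGroup (V m)] [∀ m, Module ℝ (V m)]
    (n : ℕ)
    (R : ∀ m, V m →ₗ[ℝ] V (m + 1))
    (P : ∀ m, V m →ₗ[ℝ] V m)
    (Rp : ∀ i j : ℕ, V i →ₗ[ℝ] V j)
    (hRp_diag : ∀ i, Rp i i = LinearMap.id)
    (hRp_succ : ∀ i j, i ≤ j → Rp i (j + 1) = (R j).comp (Rp i j))
    (Φ : ∀ i j : ℕ, V i →ₗ[ℝ] V j)
    (hΦ_diag : ∀ i, Φ i i = LinearMap.id)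
    (hΦ_succ : ∀ i j, i ≤ j →
      Φ i (j + 1) = ((LinearMap.id - P (j + 1)).comp (R j)).comp (Φ i j)) :
    Rp 0 n = Φ 0 n + ∑ m ∈ Finset.range n,
      (Rp (m + 1) n).comp ((P (m + 1)).comp ((R m).comp (Φ 0 m))) := by
  induction n with
  | zero => simp [hRp_diag, hΦ_diag]
  | succ n ih =>
      rw [hRp_succ 0 n (Nat.zero_le n), ih, Finset.sum_range_succ,
          hΦ_succ 0 n (Nat.zero_le n), hRp_diag]
      have hstep : ∀ m ∈ Finset.range n,
          (R n).comp ((Rp (m + 1) n).comp ((P (m + 1)).comp ((R m).comp (Φ 0 m)))) =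
          (Rp (m + 1) (n + 1)).comp ((P (m + 1)).comp ((R m).comp (Φ 0 m))) := by
        intro m hm
        rw [hRp_succ (m + 1) n (Finset.mem_range.mp hm), LinearMap.comp_assoc]
      ext x
      have hstep' : ∀ m ∈ Finset.range n,
          (R n) ((Rp (m + 1) n) ((P (m + 1)) ((R m) ((Φ 0 m) x)))) =
          (Rp (m + 1) (n + 1)) ((P (m + 1)) ((R m) ((Φ 0 m) x))) := by
        intro m hm
        have := LinearMap.ext_iff.mp (hstep m hm) x
        simpa using this
      simp only [LinearMap.add_apply, LinearMap.comp_apply, LinearMap.sum_apply,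
        LinearMap.sub_apply, LinearMap.id_apply, map_add, map_sum]
      rw [Finset.sum_congr rfl hstep']
      abel
end

section
/- Let V_0, …, V_{n+1} be vector spaces, R_m : V_m → V_{m+1} linear maps, P_m : V_m → V_m linear maps with Q_m = id − P_m, and define Φ(j,i) = (Q_j ∘ R_{j−1}) ∘ ⋯ ∘ (Q_{i+1} ∘ R_i) for j > i with Φ(i,i) = id. Let g_0 ∈ V_0 and define the trajectory g_{m+1} = R_m g_m for m = 0, …, n. Then the Mori–Zwanzig decomposition holds: g_{n+1} = R_n (P_n g_n) + R_n (Φ(n,0) Q_0 g_0) + R_n ( Σ_{m=0}^{n−1} Φ(n,m) P_m g_m ), i.e., the one-layer update splits exactly into a streaming term, a noise term, and a memory term. -/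
/-- **Discrete Mori–Zwanzig decomposition** of the forward propagation
`g_{m+1} = R_m g_m` through a stochastic neural network. `V m` is the layer-`m`
function space, `R m` the one-layer evolution operator, `P m` a projection with
complement `Q m = id - P m`, and `Φ i j` the orthogonal-dynamics propagator
`Φ(j,i) = (Q_j ∘ R_{j-1}) ∘ ⋯ ∘ (Q_{i+1} ∘ R_i)` (with `Φ i i = id`).
The one-layer update splits exactly into a streaming term, a noise term, and a
memory term:
`g_{n+1} = R_n (P_n g_n) + R_n (Φ(n,0) Q_0 g_0) + R_n (∑_{m=0}^{n-1} Φ(n,m) P_m g_m)`. -/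
theorem discrete_mori_zwanzig_decomposition
    (V : ℕ → Type*) [∀ m, AddCommGroup (V m)] [∀ m, Module ℝ (V m)]
    (n : ℕ)
    (R : ∀ m, V m →ₗ[ℝ] V (m + 1))
    (P : ∀ m, V m →ₗ[ℝ] V m)
    (Φ : ∀ i j : ℕ, V i →ₗ[ℝ] V j)
    (hΦ_diag : ∀ i, Φ i i = LinearMap.id)
    (hΦ_succ : ∀ i j, i ≤ j →
      Φ i (j + 1) = ((LinearMap.id - P (j + 1)).comp (R j)).comp (Φ i j))
    (g : ∀ m, V m)
    (hg : ∀ m, g (m + 1) = R m (g m)) :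
    g (n + 1) = R n (P n (g n))
      + R n (Φ 0 n (((LinearMap.id : V 0 →ₗ[ℝ] V 0) - P 0) (g 0)))
      + R n (∑ m ∈ Finset.range n, Φ m n (P m (g m))) := by
  have key : ∀ k, ((LinearMap.id : V k →ₗ[ℝ] V k) - P k) (g k)
      = Φ 0 k (((LinearMap.id : V 0 →ₗ[ℝ] V 0) - P 0) (g 0))
        + ∑ m ∈ Finset.range k, Φ m k (P m (g m)) := by
    intro k
    induction k with
    | zero => simp [hΦ_diag]
    | succ k ih =>
      rw [hg k]
      calc ((LinearMap.id : V (k+1) →ₗ[ℝ] V (k+1)) - P (k+1)) (R k (g k))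
          = ((LinearMap.id - P (k+1)).comp (R k))
              (P k (g k) + ((LinearMap.id : V k →ₗ[ℝ] V k) - P k) (g k)) := by
            simp
        _ = ((LinearMap.id - P (k+1)).comp (R k)) (P k (g k))
            + ((LinearMap.id - P (k+1)).comp (R k))
              (Φ 0 k (((LinearMap.id : V 0 →ₗ[ℝ] V 0) - P 0) (g 0))
                + ∑ m ∈ Finset.range k, Φ m k (P m (g m))) := by
            rw [map_add, ih]
        _ = Φ 0 (k+1) (((LinearMap.id : V 0 →ₗ[ℝ] V 0) - P 0) (g 0))
            + ∑ m ∈ Finset.range (k+1), Φ m (k+1) (P m (g m)) := by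
            rw [map_add, hΦ_succ 0 k (Nat.zero_le k), Finset.sum_range_succ, map_sum]
            have h1 : ∀ m ∈ Finset.range k,
                ((LinearMap.id - P (k+1)).comp (R k)) (Φ m k (P m (g m)))
                = Φ m (k+1) (P m (g m)) := by
              intro m hm
              rw [hΦ_succ m k (Nat.le_of_lt (Finset.mem_range.mp hm))]
              simp
            rw [Finset.sum_congr rfl h1]
            have h2 : ((LinearMap.id - P (k+1)).comp (R k)) (P k (g k))
                = Φ k (k+1) (P k (g k)) := by
              rw [hΦ_succ k k (le_refl k), hΦ_diag]; simp
            rw [h2]; simp; abel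
  have h := key n
  rw [hg n, ← map_add, ← map_add]
  congr 1
  rw [add_assoc, ← h]
  simp
end

section
/- In the setting of the previous bound (measurable A, B ⊆ ℝ^N with 0 < λ(A) < ∞, 0 < λ(B) < ∞; probability density ρ ∈ L²(ℝ^N); measurable F : A → ℝ^N with the support condition that for every x ∈ A, ρ(y − F(x)) = 0 for a.e. y ∉ B; Mori projection P on L²(A) with kernel K(x,z) = 1/λ(A) + Σ_{k=1}^M η_k(x)η_k(z) built from zero-mean orthonormal η_k; composition operator (G v)(x) = ∫_B ρ(y − F(x)) v(y) dy), suppose in addition A ⊆ Ω and B ⊆ Ω′ for measurable sets Ω, Ω′ of finite positive Lebesgue measure, and that for some κ with 0 ≤ κ < 1 one has ‖ρ‖²_{L²(ℝ^N)} ≤ κ/λ(Ω) + 1/λ(Ω′). Then ‖(I − P) ∘ G‖² ≤ κ; in particular (I − P) ∘ G is a contraction on L². -/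
/-!
`P` is the orthogonal projection of `L²(A)` onto the span of the constants and the `η k`, so
`I - P` annihilates constants and `‖(I - P) G v‖ ≤ ‖G v - c‖` for `c` the mean of `v` over `B`.
Since `y ↦ ρ (y - F x)` integrates to `1` over `B`,
`G v x - c = ∫_B (ρ (y - F x) - 1/λ(Ω')) (v y - c) dy`, and Cauchy–Schwarz bounds its square by
`(‖ρ‖² - 1/λ(Ω')) ‖v‖² ≤ κ ‖v‖² / λ(Ω)`. Integrating over `A ⊆ Ω` gives `‖(I - P) G v‖² ≤ κ ‖v‖²`.
-/

open MeasureTheory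
open scoped RealInnerProductSpace

section InnerProductSpace

variable {E : Type*} [NormedAddCommGroup E] [InnerProductSpace ℝ E]

theorem sq_inner_le_norm_sq_mul_norm_sq (x y : E) : ⟪x, y⟫ ^ 2 ≤ ‖x‖ ^ 2 * ‖y‖ ^ 2 := by
  simpa only [sq, real_inner_self_eq_norm_mul_norm, mul_mul_mul_comm] using
    real_inner_mul_inner_self_le x y

/-- With `e` the constant function `1` on `B` and `g` a translate of the noise density, this is
the pointwise bound on `G v x - mean v`; centring `g` by `L⁻¹ • e` produces the `1/λ(Ω')`. -/
theorem sq_inner_sub_le_of_inner_eq_one {g e : E} {L : ℝ} (hge : ⟪g, e⟫ = 1)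
    (hL : ‖e‖ ^ 2 ≤ L) (v : E) :
    (⟪g, v⟫ - ⟪e, v⟫ / ‖e‖ ^ 2) ^ 2 ≤ (‖g‖ ^ 2 - L⁻¹) * ‖v‖ ^ 2 := by
  have he : ‖e‖ ^ 2 ≠ 0 := by
    rintro h
    rw [sq_eq_zero_iff, norm_eq_zero] at h
    simp [h] at hge
  set c := ⟪e, v⟫ / ‖e‖ ^ 2
  set d := L⁻¹
  have hc : c * ‖e‖ ^ 2 = ⟪e, v⟫ := div_mul_cancel₀ _ he
  have hcenter : ⟪g, v⟫ - c = ⟪g - d • e, v - c • e⟫ := by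
    simp only [inner_sub_left, inner_sub_right, real_inner_smul_left, real_inner_smul_right,
      real_inner_self_eq_norm_sq, hge]
    linear_combination -d * hc
  have hg : ‖g - d • e‖ ^ 2 ≤ ‖g‖ ^ 2 - d := by
    have hdL : d ^ 2 * L = d := by
      rcases eq_or_ne L 0 with rfl | hL0
      · simp [d]
      · rw [sq, mul_assoc, inv_mul_cancel₀ hL0, mul_one]
    rw [norm_sub_sq_real, real_inner_smul_right, hge, norm_smul, mul_pow, Real.norm_eq_abs, sq_abs]
    nlinarith [mul_le_mul_of_nonneg_left hL (sq_nonneg d)]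
  have hv : ‖v - c • e‖ ^ 2 ≤ ‖v‖ ^ 2 := by
    rw [norm_sub_sq_real, real_inner_smul_right, norm_smul, mul_pow, Real.norm_eq_abs, sq_abs,
      real_inner_comm, ← hc]
    nlinarith [mul_nonneg (sq_nonneg c) (sq_nonneg ‖e‖)]
  rw [hcenter]
  calc ⟪g - d • e, v - c • e⟫ ^ 2 ≤ ‖g - d • e‖ ^ 2 * ‖v - c • e‖ ^ 2 :=
        sq_inner_le_norm_sq_mul_norm_sq _ _
    _ ≤ (‖g‖ ^ 2 - d) * ‖v‖ ^ 2 :=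
        mul_le_mul hg hv (sq_nonneg _) ((sq_nonneg _).trans hg)

variable {ι : Type*} [Fintype ι] {u : ι → E}

theorem Orthonormal.sum_inner_smul_self (hu : Orthonormal ℝ u) (j : ι) :
    ∑ i, ⟪u i, u j⟫ • u i = u j := by
  classical
  simp [orthonormal_iff_ite.mp hu]

theorem Orthonormal.norm_sub_sum_inner_smul_le (hu : Orthonormal ℝ u) (x : E) :
    ‖x - ∑ i, ⟪u i, x⟫ • u i‖ ≤ ‖x‖ := by
  set p := ∑ i, ⟪u i, x⟫ • u i
  have hxp : ⟪x, p⟫ = ‖p‖ ^ 2 := by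
    rw [← real_inner_self_eq_norm_sq, hu.inner_sum, inner_sum]
    simp [real_inner_smul_right, real_inner_comm]
  refine pow_le_pow_iff_left₀ (norm_nonneg _) (norm_nonneg _) two_ne_zero |>.mp ?_
  rw [norm_sub_sq_real, hxp]
  nlinarith [sq_nonneg ‖p‖]

theorem Orthonormal.norm_sub_apply_le_norm_sub_smul (hu : Orthonormal ℝ u) {P : E →L[ℝ] E}
    (hP : ∀ x, P x = ∑ i, ⟪u i, x⟫ • u i) (x : E) (c : ℝ) (j : ι) :
    ‖x - P x‖ ≤ ‖x - c • u j‖ := by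
  have hPj : P (u j) = u j := (hP _).trans (hu.sum_inner_smul_self j)
  calc ‖x - P x‖ = ‖(x - c • u j) - P (x - c • u j)‖ := by
        rw [map_sub, map_smul, hPj, sub_sub_sub_cancel_right]
    _ ≤ ‖x - c • u j‖ := hP (x - c • u j) ▸ hu.norm_sub_sum_inner_smul_le _

end InnerProductSpace

namespace MeasureTheory

section L2

variable {α : Type*} [MeasurableSpace α] {μ : Measure α}

theorem L2.real_inner_eq_integral (f g : Lp ℝ 2 μ) : ⟪f, g⟫ = ∫ a, f a * g a ∂μ := by
  simp [L2.inner_def, mul_comm]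

theorem L2.real_inner_toLp_left {f : α → ℝ} (hf : MemLp f 2 μ) (g : Lp ℝ 2 μ) :
    ⟪hf.toLp f, g⟫ = ∫ a, f a * g a ∂μ := by
  rw [L2.real_inner_eq_integral]
  exact integral_congr_ae (by filter_upwards [hf.coeFn_toLp] with a ha; rw [ha])

theorem L2.real_inner_toLp_toLp {f g : α → ℝ} (hf : MemLp f 2 μ) (hg : MemLp g 2 μ) :
    ⟪hf.toLp f, hg.toLp g⟫ = ∫ a, f a * g a ∂μ := by
  rw [L2.real_inner_toLp_left]
  exact integral_congr_ae (by filter_upwards [hg.coeFn_toLp] with a ha; rw [ha])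

theorem L2.norm_sq_eq_integral (f : Lp ℝ 2 μ) : ‖f‖ ^ 2 = ∫ a, f a ^ 2 ∂μ := by
  rw [← real_inner_self_eq_norm_sq, L2.real_inner_eq_integral]
  simp [sq]

theorem L2.norm_toLp_sq {f : α → ℝ} (hf : MemLp f 2 μ) : ‖hf.toLp f‖ ^ 2 = ∫ a, f a ^ 2 ∂μ := by
  rw [← real_inner_self_eq_norm_sq, L2.real_inner_toLp_toLp]
  simp [sq]

theorem L2.norm_sq_le_of_ae_sq_le [IsFiniteMeasure μ] {f : Lp ℝ 2 μ} {C : ℝ}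
    (h : ∀ᵐ a ∂μ, f a ^ 2 ≤ C) : ‖f‖ ^ 2 ≤ μ.real Set.univ * C := by
  rw [L2.norm_sq_eq_integral]
  calc ∫ a, f a ^ 2 ∂μ ≤ ∫ _, C ∂μ := integral_mono_ae (Lp.memLp f).integrable_sq
        (integrable_const C) h
    _ = μ.real Set.univ * C := by simp

variable {ι : Type*} {φ : ι → α → ℝ}

theorem orthonormal_toLp [DecidableEq ι] (hφ : ∀ i, MemLp (φ i) 2 μ)
    (h : ∀ i j, ∫ a, φ i a * φ j a ∂μ = if i = j then 1 else 0) :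
    Orthonormal ℝ fun i => (hφ i).toLp (φ i) :=
  orthonormal_iff_ite.2 fun i j => (L2.real_inner_toLp_toLp _ _).trans (h i j)

theorem coeFn_sum_inner_toLp_smul [Fintype ι] (hφ : ∀ i, MemLp (φ i) 2 μ) (f : Lp ℝ 2 μ) :
    ⇑(∑ i, ⟪(hφ i).toLp (φ i), f⟫ • (hφ i).toLp (φ i))
      =ᵐ[μ] fun x => ∫ z, (∑ i, φ i x * φ i z) * f z ∂μ := by
  have hcoe : ∀ᵐ x ∂μ, ∀ i, ((hφ i).toLp (φ i) : α → ℝ) x = φ i x :=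
    ae_all_iff.2 fun i => (hφ i).coeFn_toLp
  have hsmul : ∀ᵐ x ∂μ, ∀ i, (⟪(hφ i).toLp (φ i), f⟫ • (hφ i).toLp (φ i) : Lp ℝ 2 μ) x
      = ⟪(hφ i).toLp (φ i), f⟫ • ((hφ i).toLp (φ i) : α → ℝ) x :=
    ae_all_iff.2 fun i => Lp.coeFn_smul _ _
  filter_upwards [Lp.coeFn_fun_finsetSum Finset.univ
    fun i => ⟪(hφ i).toLp (φ i), f⟫ • (hφ i).toLp (φ i), hcoe, hsmul] with x hsum hcoe hsmul
  have hint : ∀ i, Integrable (fun z => φ i x * (φ i z * f z)) μ := fun i =>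
    ((hφ i).integrable_mul (Lp.memLp f)).const_mul (φ i x)
  simp_rw [hsum, hsmul, hcoe, Finset.sum_mul, mul_assoc]
  rw [integral_finsetSum _ fun i _ => hint i]
  simp_rw [integral_const_mul, L2.real_inner_toLp_left, smul_eq_mul, mul_comm]

end L2

section MoriProjection

variable {α : Type*} [MeasurableSpace α] {μ : Measure α} {ι : Type*}

/-- The constant `μ(univ)^{-1/2}` at `none` and `η k` at `some k`: an orthonormal basis of the
range of the Mori projection, whose kernel is `∑ i, moriFamily μ η i x * moriFamily μ η i z`. -/
noncomputable def moriFamily (μ : Measure α) (η : ι → α → ℝ) : Option ι → α → ℝ :=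
  fun i => i.elim (fun _ => (√(μ.real Set.univ))⁻¹) η

variable {η : ι → α → ℝ}

theorem memLp_moriFamily [IsFiniteMeasure μ] (hη : ∀ k, MemLp (η k) 2 μ) :
    ∀ i, MemLp (moriFamily μ η i) 2 μ
  | none => memLp_const _
  | some k => hη k

theorem integral_moriFamily_mul [IsFiniteMeasure μ] [NeZero μ] [DecidableEq ι]
    (hmean : ∀ k, ∫ x, η k x ∂μ = 0)
    (horth : ∀ i j, ∫ x, η i x * η j x ∂μ = if i = j then 1 else 0) :
    ∀ i j, ∫ x, moriFamily μ η i x * moriFamily μ η j x ∂μ = if i = j then 1 else 0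
  | none, none => by
    simp [moriFamily, ← mul_inv, Real.mul_self_sqrt measureReal_nonneg,
      measureReal_univ_ne_zero]
  | none, some k => by simp [moriFamily, integral_const_mul, hmean]
  | some k, none => by simp [moriFamily, integral_mul_const, hmean]
  | some i, some j => by simp [moriFamily, horth]

theorem sum_moriFamily_mul [Fintype ι] (x z : α) :
    ∑ i, moriFamily μ η i x * moriFamily μ η i z
      = (μ.real Set.univ)⁻¹ + ∑ k, η k x * η k z := by
  simp [Fintype.sum_option, moriFamily, ← mul_inv, Real.mul_self_sqrt measureReal_nonneg]

theorem norm_sub_moriProjection_le [IsFiniteMeasure μ] [NeZero μ] [Fintype ι] [DecidableEq ι]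
    (hη : ∀ k, MemLp (η k) 2 μ) (hmean : ∀ k, ∫ x, η k x ∂μ = 0)
    (horth : ∀ i j, ∫ x, η i x * η j x ∂μ = if i = j then 1 else 0)
    {K : α → α → ℝ} (hK : ∀ x z, K x z = (μ.real Set.univ)⁻¹ + ∑ k, η k x * η k z)
    {P : Lp ℝ 2 μ →L[ℝ] Lp ℝ 2 μ} (hP : ∀ f, ∀ᵐ x ∂μ, P f x = ∫ z, K x z * f z ∂μ)
    (f : Lp ℝ 2 μ) (c : ℝ) :
    ‖f - P f‖ ≤ ‖f - Lp.const 2 μ c‖ := by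
  set u := fun i => (memLp_moriFamily hη i).toLp (moriFamily μ η i)
  have hu : Orthonormal ℝ u := orthonormal_toLp _ (integral_moriFamily_mul hmean horth)
  have hPu : ∀ f, P f = ∑ i, ⟪u i, f⟫ • u i := by
    intro f
    refine Lp.ext (Filter.EventuallyEq.trans (hP f) ?_)
    simp_rw [hK, ← sum_moriFamily_mul]
    exact (coeFn_sum_inner_toLp_smul _ f).symm
  have hconst : Lp.const 2 μ c = (c * √(μ.real Set.univ)) • u none := by
    have : √(μ.real Set.univ) ≠ 0 := (Real.sqrt_pos.2 measureReal_univ_pos).ne'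
    change _ = Lp.const 2 μ ((c * √(μ.real Set.univ)) • (√(μ.real Set.univ))⁻¹)
    rw [smul_eq_mul, mul_inv_cancel_right₀ this]
  rw [hconst]
  exact hu.norm_sub_apply_le_norm_sub_smul hPu f _ none

end MoriProjection

section TranslationKernel

variable {G : Type*} [MeasurableSpace G] [AddGroup G] [MeasurableAdd G] {μ : Measure G}
  [μ.IsAddRightInvariant]

theorem sq_setIntegral_translate_mul_sub_le {ρ : G → ℝ} (hρ : MemLp ρ 2 μ)
    (hρ1 : ∫ z, ρ z ∂μ = 1) {B : Set G} (hB : μ B ≠ ⊤) {a : G}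
    (hsupp : ∀ᵐ y ∂μ, y ∉ B → ρ (y - a) = 0) {L : ℝ} (hL : μ.real B ≤ L)
    (v : Lp ℝ 2 (μ.restrict B)) :
    ((∫ y in B, ρ (y - a) * v y ∂μ) - (∫ y in B, v y ∂μ) / μ.real B) ^ 2
      ≤ (∫ z, ρ z ^ 2 ∂μ - L⁻¹) * ‖v‖ ^ 2 := by
  have : IsFiniteMeasure (μ.restrict B) := isFiniteMeasure_restrict.2 hB
  have hρa : MemLp (fun y => ρ (y - a)) 2 μ :=
    hρ.comp_measurePreserving (measurePreserving_sub_right μ a)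
  have hone : MemLp (fun _ => (1 : ℝ)) 2 (μ.restrict B) := memLp_const 1
  have hge : ⟪(hρa.restrict B).toLp _, hone.toLp _⟫ = 1 := by
    rw [L2.real_inner_toLp_toLp]
    simpa [setIntegral_eq_integral_of_ae_compl_eq_zero hsupp, integral_sub_right_eq_self]
      using hρ1
  have he : ‖hone.toLp _‖ ^ 2 = μ.real B := by
    rw [L2.norm_toLp_sq]
    simp
  have hg : ‖(hρa.restrict B).toLp _‖ ^ 2 ≤ ∫ z, ρ z ^ 2 ∂μ := by
    rw [L2.norm_toLp_sq, ← integral_sub_right_eq_self (fun z => ρ z ^ 2) a]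
    exact setIntegral_le_integral hρa.integrable_sq (ae_of_all _ fun y => sq_nonneg _)
  have key := sq_inner_sub_le_of_inner_eq_one hge (he ▸ hL) v
  rw [he, L2.real_inner_toLp_left, L2.real_inner_toLp_left] at key
  simp only [one_mul] at key
  exact key.trans (mul_le_mul_of_nonneg_right (by linarith) (sq_nonneg _))

end TranslationKernel

end MeasureTheory

theorem ContinuousLinearMap.opNorm_sq_le_of_norm_sq_le {E F : Type*} [SeminormedAddCommGroup E]
    [SeminormedAddCommGroup F] [NormedSpace ℝ E] [NormedSpace ℝ F] (T : E →L[ℝ] F) {κ : ℝ}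
    (hκ : 0 ≤ κ) (hT : ∀ x, ‖T x‖ ^ 2 ≤ κ * ‖x‖ ^ 2) : ‖T‖ ^ 2 ≤ κ := by
  have hle : ‖T‖ ≤ √κ := T.opNorm_le_bound (Real.sqrt_nonneg κ) fun x => by
    simpa [Real.sqrt_mul hκ, Real.sqrt_sq (norm_nonneg _)] using Real.sqrt_le_sqrt (hT x)
  simpa [Real.sq_sqrt hκ] using pow_le_pow_left₀ (norm_nonneg T) hle 2

theorem mori_projected_operator_contraction_general
    (N M : ℕ)
    (A B : Set (Fin N → ℝ)) (hAmeas : MeasurableSet A)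
    (hA0 : 0 < volume A) (hAfin : volume A < ⊤)
    (hBfin : volume B < ⊤)
    (ρ : (Fin N → ℝ) → ℝ)
    (hρint : ∫ z, ρ z = 1) (hρL2 : MemLp ρ 2 volume)
    (F : (Fin N → ℝ) → (Fin N → ℝ))
    (hsupp : ∀ x ∈ A, ∀ᵐ y ∂volume, y ∉ B → ρ (y - F x) = 0)
    (η : Fin M → (Fin N → ℝ) → ℝ)
    (hηL2 : ∀ k, MemLp (η k) 2 (volume.restrict A))
    (hmean : ∀ k, ∫ x in A, η k x = 0)
    (horth : ∀ i j, ∫ x in A, η i x * η j x = if i = j then (1 : ℝ) else 0)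
    (K : (Fin N → ℝ) → (Fin N → ℝ) → ℝ)
    (hK : ∀ x z, K x z = 1 / (volume A).toReal + ∑ k, η k x * η k z)
    (G : Lp ℝ 2 (volume.restrict B) →L[ℝ] Lp ℝ 2 (volume.restrict A))
    (hG : ∀ v, ∀ᵐ x ∂volume.restrict A, G v x = ∫ y in B, ρ (y - F x) * v y)
    (P : Lp ℝ 2 (volume.restrict A) →L[ℝ] Lp ℝ 2 (volume.restrict A))
    (hP : ∀ f, ∀ᵐ x ∂volume.restrict A, P f x = ∫ z in A, K x z * f z)
    (Ω Ω' : Set (Fin N → ℝ))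
    (hAΩ : A ⊆ Ω) (hBΩ' : B ⊆ Ω')
    (hΩfin : volume Ω < ⊤)
    (hΩ'fin : volume Ω' < ⊤)
    (κ : ℝ) (hκ0 : 0 ≤ κ) (hκ1 : κ < 1)
    (hρbound : ∫ z, ρ z ^ 2 ≤ κ / (volume Ω).toReal + 1 / (volume Ω').toReal) :
    ‖(ContinuousLinearMap.id ℝ (Lp ℝ 2 (volume.restrict A)) - P).comp G‖ ^ 2 ≤ κ
      ∧ ‖(ContinuousLinearMap.id ℝ (Lp ℝ 2 (volume.restrict A)) - P).comp G‖ < 1 := by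
  have : IsFiniteMeasure (volume.restrict A) := isFiniteMeasure_restrict.2 hAfin.ne
  have : NeZero (volume.restrict A) := ⟨by simpa [Measure.restrict_eq_zero] using hA0.ne'⟩
  have hlAΩ : volume.real A ≤ volume.real Ω := measureReal_mono hAΩ hΩfin.ne
  have hlBΩ' : volume.real B ≤ volume.real Ω' := measureReal_mono hBΩ' hΩ'fin.ne
  have hK' : ∀ x z, K x z = ((volume.restrict A).real Set.univ)⁻¹ + ∑ k, η k x * η k z := by
    simpa [measureReal_def] using hK
  have hT : ∀ v, ‖(ContinuousLinearMap.id ℝ _ - P).comp G v‖ ^ 2 ≤ κ * ‖v‖ ^ 2 := by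
    intro v
    set c := (∫ y in B, v y) / volume.real B
    have hrow : ∀ᵐ x ∂volume.restrict A,
        (G v - Lp.const 2 _ c : Lp ℝ 2 _) x ^ 2 ≤ κ / volume.real Ω * ‖v‖ ^ 2 := by
      filter_upwards [hG v, ae_restrict_mem hAmeas, Lp.coeFn_sub (G v) (Lp.const 2 _ c),
        Lp.coeFn_const 2 (volume.restrict A) c] with x hGx hx hsub hconst
      rw [hsub, Pi.sub_apply, hconst, hGx, Function.const_apply]
      refine (sq_setIntegral_translate_mul_sub_le hρL2 hρint hBfin.ne (hsupp x hx) hlBΩ' v).trans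
        (mul_le_mul_of_nonneg_right ?_ (sq_nonneg _))
      simp only [measureReal_def, one_div] at hρbound ⊢
      linarith
    calc ‖G v - P (G v)‖ ^ 2 ≤ ‖G v - Lp.const 2 _ c‖ ^ 2 := pow_le_pow_left₀ (norm_nonneg _)
          (norm_sub_moriProjection_le hηL2 hmean horth hK' hP (G v) c) 2
      _ ≤ volume.real A * (κ / volume.real Ω * ‖v‖ ^ 2) := by
          simpa using L2.norm_sq_le_of_ae_sq_le hrow
      _ = volume.real A / volume.real Ω * (κ * ‖v‖ ^ 2) := by ring
      _ ≤ κ * ‖v‖ ^ 2 := mul_le_of_le_one_left (by positivity)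
          (div_le_one_of_le₀ hlAΩ measureReal_nonneg)
  have hsq := ContinuousLinearMap.opNorm_sq_le_of_norm_sq_le _ hκ0 hT
  exact ⟨hsq, (sq_lt_one_iff₀ (norm_nonneg _)).1 (hsq.trans_lt hκ1)⟩

/-- **Contraction property of the Mori-projected composition operator.** `G` is the
one-layer composition operator of a stochastic neural network layer with noise density
`ρ`, `P` is the Mori projection on `L²(A)` with kernel
`K(x,z) = 1/λ(A) + ∑_k η_k(x)η_k(z)` built from zero-mean orthonormal `η_k`, and
`Ω, Ω'` are weight-independent enclosing sets for the layer ranges `A, B`. If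
`‖ρ‖²_{L²(ℝ^N)} ≤ κ/λ(Ω) + 1/λ(Ω')` with `0 ≤ κ < 1`, then `‖(I - P) ∘ G‖² ≤ κ`;
in particular `(I - P) ∘ G` is a contraction on `L²`. -/
theorem mori_projected_operator_contraction
    (N M : ℕ) (hN : 1 ≤ N)
    (A B : Set (Fin N → ℝ)) (hAmeas : MeasurableSet A) (hBmeas : MeasurableSet B)
    (hA0 : 0 < volume A) (hAfin : volume A < ⊤)
    (hB0 : 0 < volume B) (hBfin : volume B < ⊤)
    (ρ : (Fin N → ℝ) → ℝ) (hρmeas : Measurable ρ) (hρnn : ∀ z, 0 ≤ ρ z)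
    (hρint : ∫ z, ρ z = 1) (hρL2 : MemLp ρ 2 volume)
    (F : (Fin N → ℝ) → (Fin N → ℝ)) (hF : Measurable F)
    (hsupp : ∀ x ∈ A, ∀ᵐ y ∂volume, y ∉ B → ρ (y - F x) = 0)
    (η : Fin M → (Fin N → ℝ) → ℝ)
    (hηL2 : ∀ k, MemLp (η k) 2 (volume.restrict A))
    (hmean : ∀ k, ∫ x in A, η k x = 0)
    (horth : ∀ i j, ∫ x in A, η i x * η j x = if i = j then (1 : ℝ) else 0)
    (K : (Fin N → ℝ) → (Fin N → ℝ) → ℝ)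
    (hK : ∀ x z, K x z = 1 / (volume A).toReal + ∑ k, η k x * η k z)
    (G : Lp ℝ 2 (volume.restrict B) →L[ℝ] Lp ℝ 2 (volume.restrict A))
    (hG : ∀ v, ∀ᵐ x ∂volume.restrict A, G v x = ∫ y in B, ρ (y - F x) * v y)
    (P : Lp ℝ 2 (volume.restrict A) →L[ℝ] Lp ℝ 2 (volume.restrict A))
    (hP : ∀ f, ∀ᵐ x ∂volume.restrict A, P f x = ∫ z in A, K x z * f z)
    (Ω Ω' : Set (Fin N → ℝ)) (hΩmeas : MeasurableSet Ω) (hΩ'meas : MeasurableSet Ω')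
    (hAΩ : A ⊆ Ω) (hBΩ' : B ⊆ Ω')
    (hΩ0 : 0 < volume Ω) (hΩfin : volume Ω < ⊤)
    (hΩ'0 : 0 < volume Ω') (hΩ'fin : volume Ω' < ⊤)
    (κ : ℝ) (hκ0 : 0 ≤ κ) (hκ1 : κ < 1)
    (hρbound : ∫ z, ρ z ^ 2 ≤ κ / (volume Ω).toReal + 1 / (volume Ω').toReal) :
    ‖(ContinuousLinearMap.id ℝ (Lp ℝ 2 (volume.restrict A)) - P).comp G‖ ^ 2 ≤ κ
      ∧ ‖(ContinuousLinearMap.id ℝ (Lp ℝ 2 (volume.restrict A)) - P).comp G‖ < 1 :=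
  mori_projected_operator_contraction_general N M A B hAmeas hA0 hAfin hBfin ρ hρint hρL2 F hsupp η
    hηL2 hmean horth K hK G hG P hP Ω Ω' hAΩ hBΩ' hΩfin hΩ'fin κ hκ0 hκ1 hρbound
end

section
/- Let H_0, H_1, …, H_L be Hilbert spaces, G_m : H_m → H_{m+1} continuous linear operators for m = 0, …, L−1, and P_m : H_m → H_m orthogonal projections with Q_m = I − P_m. Define Φ(m,0) = (Q_m ∘ G_{m−1}) ∘ ⋯ ∘ (Q_1 ∘ G_0) with Φ(0,0) = id. Suppose there are constants κ ≥ 0 and B > 0 such that ‖Q_{i+1} ∘ G_i‖² ≤ κ for all i and ‖G_i‖² ≤ B for all i. Then for every m with 0 ≤ m ≤ L−1, the m-th memory term of the Mori–Zwanzig equation satisfies ‖G_{L−1} ∘ ⋯ ∘ G_{m+1} ∘ P_{m+1} ∘ G_m ∘ Φ(m,0)‖² ≤ B^{L−m} κ^m = B^L (κ/B)^m. -/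
/-!
The memory term factors as `G(L, m+1) ∘ P_{m+1} ∘ G_m ∘ Φ(m, 0)`. The squared operator norm is
submultiplicative, so it is at most the product of the squared norms of the factors:
`B^{L-m-1}` for the `L - m - 1` layers of `G(L, m+1)`, `1` for the orthogonal projection
(a star projection in the C⋆-algebra of bounded operators), `B` for `G_m` and `κ^m` for the
`m` factors `Q_{i+1} ∘ G_i` of the propagator.
-/

section Chain

variable {𝕜 : Type*} [NontriviallyNormedField 𝕜]

lemma sq_norm_comp_le {E F G : Type*} [SeminormedAddCommGroup E] [SeminormedAddCommGroup F]
    [SeminormedAddCommGroup G] [NormedSpace 𝕜 E] [NormedSpace 𝕜 F] [NormedSpace 𝕜 G]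
    {A : F →L[𝕜] G} {C : E →L[𝕜] F} {a b : ℝ} (ha : ‖A‖ ^ 2 ≤ a) (hb : ‖C‖ ^ 2 ≤ b) :
    ‖A.comp C‖ ^ 2 ≤ a * b :=
  calc ‖A.comp C‖ ^ 2 ≤ (‖A‖ * ‖C‖) ^ 2 := by gcongr; exact A.opNorm_comp_le C
    _ = ‖A‖ ^ 2 * ‖C‖ ^ 2 := mul_pow _ _ _
    _ ≤ a * b := mul_le_mul ha hb (sq_nonneg _) ((sq_nonneg _).trans ha)

lemma sq_norm_chain_le {E : ℕ → Type*} [∀ j, SeminormedAddCommGroup (E j)]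
    [∀ j, NormedSpace 𝕜 (E j)] {i n : ℕ} {c : ℝ} (T : ∀ j, E j →L[𝕜] E (j + 1))
    (F : ∀ j, E i →L[𝕜] E j) (hF_base : F i = ContinuousLinearMap.id 𝕜 (E i))
    (hF_succ : ∀ j, i ≤ j → F (j + 1) = (T j).comp (F j))
    (hT : ∀ j, i ≤ j → j + 1 ≤ n → ‖T j‖ ^ 2 ≤ c) :
    ∀ j, i ≤ j → j ≤ n → ‖F j‖ ^ 2 ≤ c ^ (j - i) := by
  intro j hij
  induction j, hij using Nat.le_induction with
  | base =>
    intro _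
    rw [hF_base, Nat.sub_self, pow_zero]
    exact pow_le_one₀ (norm_nonneg _) ContinuousLinearMap.norm_id_le
  | succ j hij ih =>
    intro hjn
    rw [hF_succ j hij, Nat.sub_add_comm hij, pow_succ' c]
    exact sq_norm_comp_le (hT j hij hjn) (ih (Nat.le_of_succ_le hjn))

end Chain

/-- Valid also for `b = 0`, where both sides vanish because `m < n`. -/
lemma pow_sub_mul_pow_eq_pow_mul_div_pow {K : Type*} [Field K] (a b : K) {m n : ℕ}
    (hmn : m < n) : b ^ (n - m) * a ^ m = b ^ n * (a / b) ^ m := by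
  rcases eq_or_ne b 0 with rfl | hb
  · simp [zero_pow (Nat.sub_ne_zero_of_lt hmn), zero_pow (Nat.ne_zero_of_lt hmn)]
  · rw [div_pow, ← Nat.sub_add_cancel hmn.le, pow_add, Nat.add_sub_cancel]
    field_simp

theorem mz_memory_term_bound_general
    (H : ℕ → Type*) [∀ m, NormedAddCommGroup (H m)]
    [∀ m, InnerProductSpace ℝ (H m)] [∀ m, CompleteSpace (H m)]
    (L : ℕ) (κ B : ℝ)
    (G : ∀ m, H m →L[ℝ] H (m + 1))
    (P : ∀ m, H m →L[ℝ] H m)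
    (hPsa : ∀ m, IsSelfAdjoint (P m))
    (hPidem : ∀ m, (P m).comp (P m) = P m)
    (hQG : ∀ i, i + 1 ≤ L →
      ‖(ContinuousLinearMap.id ℝ (H (i + 1)) - P (i + 1)).comp (G i)‖ ^ 2 ≤ κ)
    (hGB : ∀ i, i + 1 ≤ L → ‖G i‖ ^ 2 ≤ B)
    (Φ : ∀ m, H 0 →L[ℝ] H m)
    (hΦ0 : Φ 0 = ContinuousLinearMap.id ℝ (H 0))
    (hΦS : ∀ m, Φ (m + 1)
      = ((ContinuousLinearMap.id ℝ (H (m + 1)) - P (m + 1)).comp (G m)).comp (Φ m))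
    (Gc : ∀ i j : ℕ, H i →L[ℝ] H j)
    (hGc_diag : ∀ i, Gc i i = ContinuousLinearMap.id ℝ (H i))
    (hGc_succ : ∀ i j, i ≤ j → Gc i (j + 1) = (G j).comp (Gc i j)) :
    ∀ m, m + 1 ≤ L →
      ‖(Gc (m + 1) L).comp ((P (m + 1)).comp ((G m).comp (Φ m)))‖ ^ 2
          ≤ B ^ (L - m) * κ ^ m
        ∧ B ^ (L - m) * κ ^ m = B ^ L * (κ / B) ^ m := by
  intro m hm
  have hΦ : ‖Φ m‖ ^ 2 ≤ κ ^ m := by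
    simpa using sq_norm_chain_le _ Φ hΦ0 (fun j _ => hΦS j) (fun j _ => hQG j) m
      (Nat.zero_le m) (Nat.le_of_succ_le hm)
  have hGc : ‖Gc (m + 1) L‖ ^ 2 ≤ B ^ (L - (m + 1)) :=
    sq_norm_chain_le G (Gc (m + 1)) (hGc_diag _) (hGc_succ _) (fun j _ => hGB j) L hm le_rfl
  have hP : ‖P (m + 1)‖ ^ 2 ≤ 1 :=
    pow_le_one₀ (norm_nonneg _) (IsStarProjection.norm_le _ ⟨hPidem (m + 1), hPsa (m + 1)⟩)
  refine ⟨?_, pow_sub_mul_pow_eq_pow_mul_div_pow κ B hm⟩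
  calc _ ≤ B ^ (L - (m + 1)) * (1 * (B * κ ^ m)) :=
        sq_norm_comp_le hGc (sq_norm_comp_le hP (sq_norm_comp_le (hGB m hm) hΦ))
    _ = B ^ (L - (m + 1) + 1) * κ ^ m := by ring
    _ = B ^ (L - m) * κ ^ m := by
        rw [Nat.sub_add_eq, Nat.sub_add_cancel (Nat.le_sub_of_add_le' hm)]

/-- **Bound on the Mori–Zwanzig memory terms.** `H m` is the `L²` space attached to layer
`m` of a stochastic neural network, `G m : H m →L H (m+1)` the one-layer composition
operator, `P m` an orthogonal projection (self-adjoint and idempotent) with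
`Q m = id - P m`, `Φ m = (Q_m ∘ G_{m-1}) ∘ ⋯ ∘ (Q_1 ∘ G_0)` the orthogonal-dynamics
propagator, and `Gc i j = G_{j-1} ∘ ⋯ ∘ G_i` the multi-layer composition operator.
If `‖Q_{i+1} ∘ G_i‖² ≤ κ` and `‖G_i‖² ≤ B` for all relevant `i`, then the `m`-th memory
term satisfies `‖G(L,m+1) ∘ P_{m+1} ∘ G_m ∘ Φ(m,0)‖² ≤ B^{L-m} κ^m = B^L (κ/B)^m`. -/
theorem mz_memory_term_bound
    (H : ℕ → Type*) [∀ m, NormedAddCommGroup (H m)]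
    [∀ m, InnerProductSpace ℝ (H m)] [∀ m, CompleteSpace (H m)]
    (L : ℕ) (κ B : ℝ) (hκ : 0 ≤ κ) (hB : 0 < B)
    (G : ∀ m, H m →L[ℝ] H (m + 1))
    (P : ∀ m, H m →L[ℝ] H m)
    (hPsa : ∀ m, IsSelfAdjoint (P m))
    (hPidem : ∀ m, (P m).comp (P m) = P m)
    (hQG : ∀ i, i + 1 ≤ L →
      ‖(ContinuousLinearMap.id ℝ (H (i + 1)) - P (i + 1)).comp (G i)‖ ^ 2 ≤ κ)
    (hGB : ∀ i, i + 1 ≤ L → ‖G i‖ ^ 2 ≤ B)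
    (Φ : ∀ m, H 0 →L[ℝ] H m)
    (hΦ0 : Φ 0 = ContinuousLinearMap.id ℝ (H 0))
    (hΦS : ∀ m, Φ (m + 1)
      = ((ContinuousLinearMap.id ℝ (H (m + 1)) - P (m + 1)).comp (G m)).comp (Φ m))
    (Gc : ∀ i j : ℕ, H i →L[ℝ] H j)
    (hGc_diag : ∀ i, Gc i i = ContinuousLinearMap.id ℝ (H i))
    (hGc_succ : ∀ i j, i ≤ j → Gc i (j + 1) = (G j).comp (Gc i j)) :
    ∀ m, m + 1 ≤ L →
      ‖(Gc (m + 1) L).comp ((P (m + 1)).comp ((G m).comp (Φ m)))‖ ^ 2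
          ≤ B ^ (L - m) * κ ^ m
        ∧ B ^ (L - m) * κ ^ m = B ^ L * (κ / B) ^ m :=
  mz_memory_term_bound_general H L κ B G P hPsa hPidem hQG hGB Φ hΦ0 hΦS Gc hGc_diag hGc_succ
end

section
/- Fix N ≥ 1 and let λ denote Lebesgue measure on ℝ^N. Let A, B, Ω ⊆ ℝ^N be measurable sets with 0 < λ(A) < ∞, 0 < λ(B) < ∞, λ(Ω) < ∞ and A ⊆ Ω; let ρ : ℝ^N → [0,∞) be a measurable probability density with ρ ∈ L²(ℝ^N), and let F : A → ℝ^N be measurable satisfying the support condition: for every x ∈ A, ρ(y − F(x)) = 0 for almost every y ∉ B. If ∫_{ℝ^N} ρ(x)² dx ≤ κ / λ(Ω) for some 0 ≤ κ < 1, then the composition operator M : L²(B) → L²(A), (M v)(x) = ∫_B ρ(y − F(x)) v(y) dy, and the transfer operator N̂ : L²(A) → L²(B), (N̂ p)(y) = ∫_A ρ(y − F(x)) p(x) dx, both have squared operator norm at most κ; in particular they are contractions, and this condition is independent of the neural network weights. -/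
/-! Both operators are integral operators with kernel `ρ (y - F x)`, so by Cauchy–Schwarz their
squared norms are bounded by the squared Hilbert–Schmidt norm `∫_A ∫_B ρ (y - F x) ^ 2 dy dx`.
By translation invariance of Lebesgue measure each inner integral is at most `∫ ρ ^ 2`, so the
Hilbert–Schmidt norm squared is at most `λ(A) ∫ ρ ^ 2 ≤ λ(Ω) ∫ ρ ^ 2 ≤ κ`. -/

open MeasureTheory ENNReal

section

variable {α β : Type*} [MeasurableSpace α] [MeasurableSpace β] {μ : Measure α} {ν : Measure β}

theorem ENNReal.lintegral_mul_sq_le {f g : α → ℝ≥0∞} (hf : AEMeasurable f μ)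
    (hg : AEMeasurable g μ) :
    (∫⁻ a, f a * g a ∂μ) ^ 2 ≤ (∫⁻ a, f a ^ 2 ∂μ) * ∫⁻ a, g a ^ 2 ∂μ := by
  have hsq : ∀ x : ℝ≥0∞, (x ^ (1 / 2 : ℝ)) ^ 2 = x := fun x => by
    rw [← ENNReal.rpow_natCast, ← ENNReal.rpow_mul]; norm_num
  have h := ENNReal.lintegral_mul_le_Lp_mul_Lq μ Real.HolderConjugate.two_two hf hg
  calc (∫⁻ a, f a * g a ∂μ) ^ 2 ≤ _ := pow_le_pow_left' h 2
    _ = _ := by simp only [mul_pow, hsq, ← ENNReal.rpow_natCast, Nat.cast_ofNat]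

theorem ENNReal.ofReal_mul_le_of_le_div {a κ : ℝ} {m : ℝ≥0∞} (hm : m ≠ ∞)
    (h : a ≤ κ / m.toReal) : ENNReal.ofReal a * m ≤ ENNReal.ofReal κ := by
  rcases (ENNReal.toReal_nonneg (a := m)).eq_or_lt with hm0 | hm0
  · simp [(ENNReal.toReal_eq_zero_iff m).mp hm0.symm |>.resolve_right hm]
  rw [← ENNReal.ofReal_toReal hm, ← ENNReal.ofReal_mul' hm0.le]
  exact ENNReal.ofReal_le_ofReal ((le_div_iff₀ hm0).mp h)

namespace MeasureTheory

theorem eLpNorm_two_pow_two {E : Type*} [NormedAddCommGroup E] (f : α → E) :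
    eLpNorm f 2 μ ^ 2 = ∫⁻ a, ‖f a‖ₑ ^ 2 ∂μ := by
  rw [eLpNorm_eq_lintegral_rpow_enorm_toReal two_ne_zero ofNat_ne_top, ← ENNReal.rpow_natCast,
    ← ENNReal.rpow_mul]
  simp only [toReal_ofNat, Nat.cast_ofNat, one_div, ENNReal.rpow_two]
  rw [inv_mul_cancel₀ (two_ne_zero (α := ℝ)), ENNReal.rpow_one]

theorem MemLp.lintegral_enorm_sq_eq {f : α → ℝ} (hf : MemLp f 2 μ) :
    ∫⁻ a, ‖f a‖ₑ ^ 2 ∂μ = ENNReal.ofReal (∫ a, f a ^ 2 ∂μ) := by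
  rw [ofReal_integral_eq_lintegral_ofReal hf.integrable_sq (ae_of_all _ fun a => sq_nonneg _)]
  refine lintegral_congr fun a => ?_
  rw [Real.enorm_eq_ofReal_abs, ← ENNReal.ofReal_pow (abs_nonneg _), sq_abs]

theorem enorm_integral_mul_sq_le {g u : β → ℝ} (hg : AEStronglyMeasurable g ν)
    (hu : AEStronglyMeasurable u ν) :
    ‖∫ b, g b * u b ∂ν‖ₑ ^ 2 ≤ (∫⁻ b, ‖g b‖ₑ ^ 2 ∂ν) * eLpNorm u 2 ν ^ 2 := by
  rw [eLpNorm_two_pow_two]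
  calc ‖∫ b, g b * u b ∂ν‖ₑ ^ 2 ≤ (∫⁻ b, ‖g b‖ₑ * ‖u b‖ₑ ∂ν) ^ 2 := by
        gcongr
        simpa only [enorm_mul] using enorm_integral_le_lintegral_enorm (fun b => g b * u b)
    _ ≤ _ := ENNReal.lintegral_mul_sq_le hg.enorm hu.enorm

theorem eLpNorm_integral_kernel_sq_le {k : α → β → ℝ} {u : β → ℝ}
    (hk : ∀ a, AEStronglyMeasurable (k a) ν) (hu : MemLp u 2 ν) :
    eLpNorm (fun a => ∫ b, k a b * u b ∂ν) 2 μ ^ 2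
      ≤ (∫⁻ a, ∫⁻ b, ‖k a b‖ₑ ^ 2 ∂ν ∂μ) * eLpNorm u 2 ν ^ 2 := by
  rw [eLpNorm_two_pow_two, ← lintegral_mul_const' _ _ (pow_ne_top hu.eLpNorm_ne_top)]
  exact lintegral_mono fun a => enorm_integral_mul_sq_le (hk a) hu.aestronglyMeasurable

theorem lintegral_lintegral_sub_le {G : Type*} [MeasurableSpace G] [AddGroup G] [MeasurableAdd G]
    {η : Measure G} [η.IsAddRightInvariant] (f : G → ℝ≥0∞) (F : α → G) (B : Set G) :
    ∫⁻ x, ∫⁻ y in B, f (y - F x) ∂η ∂μ ≤ (∫⁻ z, f z ∂η) * μ Set.univ := by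
  calc ∫⁻ x, ∫⁻ y in B, f (y - F x) ∂η ∂μ ≤ ∫⁻ _, ∫⁻ z, f z ∂η ∂μ :=
        lintegral_mono fun x =>
          (setLIntegral_le_lintegral B _).trans_eq (lintegral_sub_right_eq_self f (F x))
    _ = _ := lintegral_const _

end MeasureTheory

theorem ContinuousLinearMap.norm_sq_le_of_integral_kernel (L : Lp ℝ 2 ν →L[ℝ] Lp ℝ 2 μ)
    {k : α → β → ℝ} (hk : ∀ a, AEStronglyMeasurable (k a) ν)
    (hL : ∀ u, ∀ᵐ a ∂μ, L u a = ∫ b, k a b * u b ∂ν) {κ : ℝ} (hκ : 0 ≤ κ)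
    (hHS : ∫⁻ a, ∫⁻ b, ‖k a b‖ₑ ^ 2 ∂ν ∂μ ≤ ENNReal.ofReal κ) :
    ‖L‖ ^ 2 ≤ κ := by
  suffices ∀ u, ‖L u‖ ≤ √κ * ‖u‖ by
    simpa [Real.sq_sqrt hκ] using pow_le_pow_left₀ (norm_nonneg L)
      (L.opNorm_le_bound (Real.sqrt_nonneg κ) this) 2
  intro u
  have hsq : eLpNorm (L u) 2 μ ^ 2 ≤ ENNReal.ofReal κ * eLpNorm u 2 ν ^ 2 := by
    rw [eLpNorm_congr_ae (hL u)]
    exact (eLpNorm_integral_kernel_sq_le hk (Lp.memLp u)).trans (by gcongr)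
  have hreal : ‖L u‖ ^ 2 ≤ κ * ‖u‖ ^ 2 := by
    simpa [Lp.norm_def, ENNReal.toReal_mul, ENNReal.toReal_pow, ENNReal.toReal_ofReal hκ] using
      ENNReal.toReal_mono (mul_ne_top ofReal_ne_top (pow_ne_top (Lp.eLpNorm_ne_top u))) hsq
  rw [← Real.sqrt_sq (norm_nonneg (L u)), ← Real.sqrt_sq (norm_nonneg u), ← Real.sqrt_mul hκ]
  exact Real.sqrt_le_sqrt hreal

end

theorem composition_transfer_operators_contraction_general
    (N : ℕ)
    (A B : Set (Fin N → ℝ))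
    (ρ : (Fin N → ℝ) → ℝ) (hρmeas : Measurable ρ)
    (hρL2 : MemLp ρ 2 volume)
    (F : (Fin N → ℝ) → (Fin N → ℝ)) (hF : Measurable F)
    (Ω : Set (Fin N → ℝ)) (hAΩ : A ⊆ Ω)
    (hΩfin : volume Ω < ⊤)
    (κ : ℝ) (hκ0 : 0 ≤ κ) (hκ1 : κ < 1)
    (hρ2 : ∫ z, ρ z ^ 2 ≤ κ / (volume Ω).toReal)
    (M : Lp ℝ 2 (volume.restrict B) →L[ℝ] Lp ℝ 2 (volume.restrict A))
    (hM : ∀ v, ∀ᵐ x ∂volume.restrict A, M v x = ∫ y in B, ρ (y - F x) * v y)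
    (T : Lp ℝ 2 (volume.restrict A) →L[ℝ] Lp ℝ 2 (volume.restrict B))
    (hT : ∀ p, ∀ᵐ y ∂volume.restrict B, T p y = ∫ x in A, ρ (y - F x) * p x) :
    ‖M‖ ^ 2 ≤ κ ∧ ‖T‖ ^ 2 ≤ κ ∧ ‖M‖ < 1 ∧ ‖T‖ < 1 := by
  have hHS : ∫⁻ x in A, ∫⁻ y in B, ‖ρ (y - F x)‖ₑ ^ 2 ≤ ENNReal.ofReal κ :=
    calc ∫⁻ x in A, ∫⁻ y in B, ‖ρ (y - F x)‖ₑ ^ 2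
        ≤ (∫⁻ z, ‖ρ z‖ₑ ^ 2) * volume A := by
          simpa using lintegral_lintegral_sub_le (η := volume) (μ := volume.restrict A)
            (fun z => ‖ρ z‖ₑ ^ 2) F B
      _ ≤ ENNReal.ofReal (∫ z, ρ z ^ 2) * volume Ω := by
          rw [hρL2.lintegral_enorm_sq_eq]
          gcongr
      _ ≤ ENNReal.ofReal κ := ENNReal.ofReal_mul_le_of_le_div hΩfin.ne hρ2
  have hHS' : ∫⁻ y in B, ∫⁻ x in A, ‖ρ (y - F x)‖ₑ ^ 2 ≤ ENNReal.ofReal κ := by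
    rwa [lintegral_lintegral_swap ((hρmeas.comp
      (measurable_fst.sub (hF.comp measurable_snd))).enorm.pow_const 2).aemeasurable]
  have hMκ : ‖M‖ ^ 2 ≤ κ := M.norm_sq_le_of_integral_kernel
    (fun x => (hρmeas.comp (measurable_id.sub_const (F x))).aestronglyMeasurable) hM hκ0 hHS
  have hTκ : ‖T‖ ^ 2 ≤ κ := T.norm_sq_le_of_integral_kernel
    (fun y => (hρmeas.comp (measurable_const.sub hF)).aestronglyMeasurable) hT hκ0 hHS'
  have lt_one {r : ℝ} (hr : 0 ≤ r) (h : r ^ 2 ≤ κ) : r < 1 :=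
    (pow_lt_one_iff_of_nonneg hr two_ne_zero).mp (h.trans_lt hκ1)
  exact ⟨hMκ, hTκ, lt_one (norm_nonneg M) hMκ, lt_one (norm_nonneg T) hTκ⟩

/-- **Random noise can induce contractions.** `ρ(y - F(x))` is the one-layer conditional
transition density of a stochastic neural network layer `X_{n+1} = F(X_n) + ξ_n` with
noise density `ρ`; `A` is the range of `X_n`, `B` the range of `X_{n+1}`, and `Ω` a
weight-independent measurable set enclosing `A`. If `∫ ρ² ≤ κ/λ(Ω)` with `0 ≤ κ < 1`,
then the composition operator `M : L²(B) → L²(A)` and the transfer operator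
`N̂ : L²(A) → L²(B)` both have squared operator norm at most `κ`; in particular they are
contractions, independently of the neural network weights. -/
theorem composition_transfer_operators_contraction
    (N : ℕ) (hN : 1 ≤ N)
    (A B : Set (Fin N → ℝ)) (hAmeas : MeasurableSet A) (hBmeas : MeasurableSet B)
    (hA0 : 0 < volume A) (hAfin : volume A < ⊤)
    (hB0 : 0 < volume B) (hBfin : volume B < ⊤)
    (ρ : (Fin N → ℝ) → ℝ) (hρmeas : Measurable ρ) (hρnn : ∀ z, 0 ≤ ρ z)
    (hρint : ∫ z, ρ z = 1) (hρL2 : MemLp ρ 2 volume)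
    (F : (Fin N → ℝ) → (Fin N → ℝ)) (hF : Measurable F)
    (hsupp : ∀ x ∈ A, ∀ᵐ y ∂volume, y ∉ B → ρ (y - F x) = 0)
    (Ω : Set (Fin N → ℝ)) (hΩmeas : MeasurableSet Ω) (hAΩ : A ⊆ Ω)
    (hΩfin : volume Ω < ⊤)
    (κ : ℝ) (hκ0 : 0 ≤ κ) (hκ1 : κ < 1)
    (hρ2 : ∫ z, ρ z ^ 2 ≤ κ / (volume Ω).toReal)
    (M : Lp ℝ 2 (volume.restrict B) →L[ℝ] Lp ℝ 2 (volume.restrict A))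
    (hM : ∀ v, ∀ᵐ x ∂volume.restrict A, M v x = ∫ y in B, ρ (y - F x) * v y)
    (T : Lp ℝ 2 (volume.restrict A) →L[ℝ] Lp ℝ 2 (volume.restrict B))
    (hT : ∀ p, ∀ᵐ y ∂volume.restrict B, T p y = ∫ x in A, ρ (y - F x) * p x) :
    ‖M‖ ^ 2 ≤ κ ∧ ‖T‖ ^ 2 ≤ κ ∧ ‖M‖ < 1 ∧ ‖T‖ < 1 :=
  composition_transfer_operators_contraction_general N A B ρ hρmeas hρL2 F hF Ω hAΩ hΩfin κ hκ0 hκ1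
    hρ2 M hM T hT
end
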